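/- arXiv:math/0507007 — 4 statements merged into one kernel-verified Lean document; each statement's English description precedes it below -/
import Mathlib

section
/- For every integer g ≥ 2, the rational number 2^(2g)·(3g−3)/(2g−3) is an integer if and only if g = 2 or g = 3. Equivalently, (2g−3) divides 3·2^(2g)·(g−1) exactly when g ∈ {2,3}. -/
lemma key_nat_dvd (g : ℕ) (hg : 2 ≤ g) :
    (2 * g - 3) ∣ 3 * 2 ^ (2 * g) * (g - 1) ↔ (g = 2 ∨ g = 3) := by
  constructor
  · intro h
    by_contra hc
    push_neg at hc
    have hg4 : 4 ≤ g := by omega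
    have hodd : Odd (2 * g - 3) := ⟨g - 2, by omega⟩
    have hcop : Nat.Coprime (2 * g - 3) (2 ^ (2 * g)) :=
      Nat.Coprime.pow_right _ (Nat.coprime_two_right.mpr hodd)
    have h' : (2 * g - 3) ∣ 2 ^ (2 * g) * (3 * (g - 1)) := by
      have : 3 * 2 ^ (2 * g) * (g - 1) = 2 ^ (2 * g) * (3 * (g - 1)) := by ring
      rwa [this] at h
    have h1 : (2 * g - 3) ∣ 3 * (g - 1) := hcop.dvd_of_dvd_mul_left h'
    have h2 : (2 * g - 3) ∣ 2 * (3 * (g - 1)) := h1.mul_left 2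
    have h3 : 2 * (3 * (g - 1)) = 3 * (2 * g - 3) + 3 := by omega
    rw [h3] at h2
    have h4 : (2 * g - 3) ∣ 3 := (Nat.dvd_add_right (Dvd.intro_left 3 rfl)).mp h2
    have := Nat.le_of_dvd (by norm_num) h4
    omega
  · rintro (rfl | rfl) <;> decide

/-- For every integer `g ≥ 2`, the rational number `2^(2g)·(3g−3)/(2g−3)` is an integer
iff `g = 2` or `g = 3`; equivalently `(2g−3) ∣ 3·2^(2g)·(g−1)` exactly when `g ∈ {2,3}`. -/
theorem stringy_euler_integral_iff (g : ℕ) (hg : 2 ≤ g) :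
    ((∃ n : ℤ, ((2 : ℚ) ^ (2 * g) * (3 * (g : ℚ) - 3)) / (2 * (g : ℚ) - 3) = (n : ℚ)) ↔
      (g = 2 ∨ g = 3)) ∧
    ((2 * g - 3) ∣ 3 * 2 ^ (2 * g) * (g - 1) ↔ (g = 2 ∨ g = 3)) := by
  have hkey := key_nat_dvd g hg
  have hgQ : (2 : ℚ) ≤ (g : ℚ) := by exact_mod_cast hg
  have hD : (2 * (g : ℚ) - 3) ≠ 0 := by linarith
  have hcast1 : ((2 * g - 3 : ℕ) : ℤ) = 2 * (g : ℤ) - 3 := by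
    push_cast [Nat.cast_sub (by omega : 3 ≤ 2 * g)]; ring
  have hcast2 : ((3 * 2 ^ (2 * g) * (g - 1) : ℕ) : ℤ)
      = 2 ^ (2 * g) * (3 * (g : ℤ) - 3) := by
    push_cast [Nat.cast_sub (by omega : 1 ≤ g)]; ring
  have hint : ((2 * (g : ℤ) - 3) ∣ 2 ^ (2 * g) * (3 * (g : ℤ) - 3)) ↔
      (2 * g - 3) ∣ 3 * 2 ^ (2 * g) * (g - 1) := by
    rw [← hcast1, ← hcast2, Int.natCast_dvd_natCast]
  refine ⟨?_, hkey⟩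
  rw [← hkey, ← hint]
  constructor
  · rintro ⟨n, hn⟩
    refine ⟨n, ?_⟩
    have h := (div_eq_iff hD).mp hn
    have : ((2 : ℚ) ^ (2 * g) * (3 * (g : ℚ) - 3)) = ((2 * (g : ℤ) - 3) * n : ℤ) := by
      push_cast; linarith [h]
    exact_mod_cast this
  · rintro ⟨c, hc⟩
    refine ⟨c, ?_⟩
    rw [div_eq_iff hD]
    have : ((2 : ℚ) ^ (2 * g) * (3 * (g : ℚ) - 3)) = (((2 * (g : ℤ) - 3) * c : ℤ) : ℚ) := by
      exact_mod_cast congrArg (fun x : ℤ => (x : ℚ)) hc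
    rw [this]; push_cast; ring
end

section
/- For integers 0 ≤ k ≤ g, the rational function ∏_{i=1}^{k} (1−t^(2g−2k+2i))/(1−t^i) is a polynomial in t with nonnegative integer coefficients. -/
open Polynomial

noncomputable def φ : Polynomial ℕ →+* RatFunc ℚ :=
  (algebraMap (Polynomial ℚ) (RatFunc ℚ)).comp (Polynomial.mapRingHom (Nat.castRingHom ℚ))

lemma φ_def (p : Polynomial ℕ) :
    φ p = algebraMap (Polynomial ℚ) (RatFunc ℚ) (p.map (Nat.castRingHom ℚ)) := rfl

lemma one_sub_ne (i : ℕ) (hi : i ≠ 0) : (1 - RatFunc.X ^ i : RatFunc ℚ) ≠ 0 := by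
  have h1 : (1 - RatFunc.X ^ i : RatFunc ℚ) = algebraMap (Polynomial ℚ) _ (1 - X^i) := by
    simp [map_sub, map_pow, RatFunc.algebraMap_X]
  rw [h1]
  apply RatFunc.algebraMap_ne_zero
  intro h
  have := congrArg natDegree (sub_eq_zero.mp h)
  simp [natDegree_X_pow] at this
  exact hi this.symm

/-- `N a b = ∏_{e=a}^b (1 - X^e)` -/
noncomputable def N (a b : ℕ) : RatFunc ℚ := ∏ e ∈ Finset.Icc a b, (1 - RatFunc.X ^ e)

lemma N_ne (a b : ℕ) (ha : a ≠ 0) : N a b ≠ 0 := by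
  apply Finset.prod_ne_zero_iff.mpr
  intro e he
  exact one_sub_ne e (by have := (Finset.mem_Icc.mp he).1; omega)

lemma N_top (a b : ℕ) (h : a ≤ b + 1) : N a (b+1) = N a b * (1 - RatFunc.X ^ (b+1)) :=
  Finset.prod_Icc_succ_top h _

lemma N_bot (a b : ℕ) (h : a ≤ b) : N a b = (1 - RatFunc.X ^ a) * N (a+1) b := by
  have : Finset.Icc a b = insert a (Finset.Icc (a+1) b) := by
    ext x; simp [Finset.mem_Icc]; omega
  rw [N, this, Finset.prod_insert (by simp)]
  rfl

/-- the Gaussian binomial as a rational function -/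
noncomputable def gb (g k : ℕ) : RatFunc ℚ :=
  ∏ i ∈ Finset.Icc 1 k, ((1 - RatFunc.X ^ (g - k + i)) / (1 - RatFunc.X ^ i))

lemma gb_eq (g k : ℕ) : gb g k = N (g - k + 1) (g - k + k) / N 1 k := by
  rw [gb, Finset.prod_div_distrib, N, N]
  congr 1
  rw [← Finset.map_add_left_Icc 1 k (g - k), Finset.prod_map]
  simp [addLeftEmbedding]

lemma gb_poly : ∀ g k, k ≤ g → ∃ p : Polynomial ℕ, gb g k = φ p := by
  intro g
  induction g with
  | zero => intro k hk; exact ⟨1, by interval_cases k; simp [gb]⟩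
  | succ g ih =>
    intro k hk
    match k with
    | 0 => exact ⟨1, by simp [gb]⟩
    | (j+1) =>
      rcases Nat.lt_or_ge j g with hj | hj
      · -- j + 1 ≤ g : Pascal
        obtain ⟨p, hp⟩ := ih (j+1) hj
        obtain ⟨q, hq⟩ := ih j (le_of_lt hj)
        refine ⟨p + X ^ (g - j) * q, ?_⟩
        have key : gb (g+1) (j+1) = gb g (j+1) + RatFunc.X ^ (g - j) * gb g j := by
          rw [gb_eq, gb_eq, gb_eq]
          have e1 : g + 1 - (j+1) = g - j := by omega
          have e2 : g - (j+1) = g - j - 1 := by omega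
          rw [e1, e2]
          have h1 : g - j + (j+1) = g + 1 := by omega
          have h2 : g - j - 1 + (j + 1) = g := by omega
          have h3 : g - j + j = g := by omega
          rw [h1, h2, h3]
          have hgj : 1 ≤ g - j := by omega
          -- N (g-j) g = (1 - X^(g-j)) * N (g-j+1) g
          have hb : N (g - j - 1 + 1) g = (1 - RatFunc.X ^ (g-j)) * N (g - j + 1) g := by
            rw [show g - j - 1 + 1 = g - j by omega]
            exact N_bot _ _ (by omega)
          -- N (g-j+1) (g+1) = N (g-j+1) g * (1 - X^(g+1))
          have ht : N (g - j + 1) (g + 1) = N (g - j + 1) g * (1 - RatFunc.X ^ (g+1)) :=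
            N_top _ _ (by omega)
          have hd : N 1 (j+1) = N 1 j * (1 - RatFunc.X ^ (j+1)) := N_top _ _ (by omega)
          rw [hb, ht, hd]
          have d1 : N 1 j ≠ 0 := N_ne _ _ one_ne_zero
          have d2 : (1 - RatFunc.X ^ (j+1) : RatFunc ℚ) ≠ 0 := one_sub_ne _ (by omega)
          have hX : (RatFunc.X : RatFunc ℚ)^(g+1) = RatFunc.X^(g-j) * RatFunc.X^(j+1) := by
            rw [← pow_add]; congr 1; omega
          rw [hX]
          field_simp
          ring
        rw [key, hp, hq, map_add, map_mul]
        congr 1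
        congr 1
        simp [φ, Polynomial.map_pow, map_pow, RatFunc.algebraMap_X]
      · -- j = g : gb (g+1) (g+1) = 1
        have hjg : j = g := by omega
        subst hjg
        refine ⟨1, ?_⟩
        have : gb (j+1) (j+1) = 1 := by
          rw [gb]
          apply Finset.prod_eq_one
          intro i hi
          rw [Nat.sub_self, Nat.zero_add]
          exact div_self (one_sub_ne i (by have := (Finset.mem_Icc.mp hi).1; omega))
        rw [this]; simp [φ]

/-- For `0 ≤ k ≤ g`, the rational function `∏_{i=1}^k (1−t^(2g−2k+2i))/(1−t^i)`
(the E-polynomial of the isotropic Grassmannian `Gr^ω(k,2g)`) is a polynomial in `t`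
with nonnegative integer coefficients. -/
theorem isotropic_grassmannian_poly (g k : ℕ) (hk : k ≤ g) :
    ∃ p : Polynomial ℕ,
      (∏ i ∈ Finset.Icc 1 k,
          ((1 - RatFunc.X ^ (2 * g - 2 * k + 2 * i)) / (1 - RatFunc.X ^ i) : RatFunc ℚ))
        = algebraMap (Polynomial ℚ) (RatFunc ℚ) (p.map (Nat.castRingHom ℚ)) := by
  obtain ⟨q, hq⟩ := gb_poly g k hk
  refine ⟨(∏ i ∈ Finset.Icc 1 k, (1 + X ^ (g - k + i))) * q, ?_⟩
  rw [← φ_def, map_mul, map_prod, ← hq, gb, ← Finset.prod_mul_distrib]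
  apply Finset.prod_congr rfl
  intro i hi
  have : (2 * g - 2 * k + 2 * i) = (g - k + i) + (g - k + i) := by omega
  rw [this, pow_add]
  have hfac : (1 - RatFunc.X ^ (g-k+i) * RatFunc.X ^ (g-k+i) : RatFunc ℚ)
      = (1 + RatFunc.X ^ (g-k+i)) * (1 - RatFunc.X ^ (g-k+i)) := by ring
  rw [hfac, mul_div_assoc]
  congr 1
  simp [φ, Polynomial.map_add, Polynomial.map_pow, map_add, map_pow, RatFunc.algebraMap_X]
end

section
/- In the field ℚ(t), for every integer g ≥ 2 the following identity holds: (1/(1−t^2))·(1−t^(3g))/(1−t) − t^(2g−1)·(1−t^g)/(1−t)^2 + [ (1−t^g)/((1−t)(1−t^2)) · t(1−t^(2g−3))/(1−t) − t^(g−1)·(1−t^(g−1))/(1−t)^2 · (1−t^g)/(1−t) ] = (1−t^(g−1))(1−t^g)(1−t^(g+1)) / ((1−t)^2(1−t^2)). -/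
set_option maxHeartbeats 1000000 in
theorem aux_identity (t u : RatFunc ℚ) (h1 : (1:RatFunc ℚ) - t ≠ 0) (h3 : (1:RatFunc ℚ) + t ≠ 0) :
    (1 / ((1-t)*(1+t))) * ((1 - u^3 * t^6) / (1 - t))
      - t ^ 3 * u^2 * ((1 - u * t^2) / (1 - t) ^ 2)
      + ((1 - u * t^2) / ((1 - t) * ((1-t)*(1+t))) * (t * (1 - u^2 * t) / (1 - t))
          - t * u * ((1 - t * u) / (1 - t) ^ 2) * ((1 - u * t^2) / (1 - t)))
      = (1 - t * u) * (1 - u * t^2) * (1 - u * t^3) /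
          ((1 - t) ^ 2 * ((1-t)*(1+t))) := by
  have hD : ((1:RatFunc ℚ)-t)^3*(1+t) ≠ 0 := mul_ne_zero (pow_ne_zero _ h1) h3
  have e1 : (1 / ((1-t)*(1+t))) * ((1 - u^3 * t^6) / (1 - t))
      = ((1 - u^3*t^6)*(1-t)) / ((1-t)^3*(1+t)) := by
    rw [div_mul_div_comm, div_eq_div_iff (by
      rw [show ((1:RatFunc ℚ)-t)*(1+t)*(1-t) = (1-t)^2*(1+t) by ring]
      exact mul_ne_zero (pow_ne_zero _ h1) h3) hD]
    ring
  have e2 : t ^ 3 * u^2 * ((1 - u * t^2) / (1 - t) ^ 2)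
      = (t^3*u^2*(1-u*t^2)*((1-t)*(1+t))) / ((1-t)^3*(1+t)) := by
    rw [mul_div_assoc', div_eq_div_iff (pow_ne_zero _ h1) hD]; ring
  have e3 : (1 - u * t^2) / ((1 - t) * ((1-t)*(1+t))) * (t * (1 - u^2 * t) / (1 - t))
      = ((1-u*t^2)*(t*(1-u^2*t))) / ((1-t)^3*(1+t)) := by
    rw [div_mul_div_comm, div_eq_div_iff (by
      rw [show ((1:RatFunc ℚ)-t)*((1-t)*(1+t))*(1-t) = (1-t)^3*(1+t) by ring]
      exact hD) hD]
    ring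
  have e4 : t * u * ((1 - t * u) / (1 - t) ^ 2) * ((1 - u * t^2) / (1 - t))
      = (t*u*(1-t*u)*(1-u*t^2)*(1+t)) / ((1-t)^3*(1+t)) := by
    rw [mul_assoc, div_mul_div_comm, mul_div_assoc', div_eq_div_iff (by
      rw [show ((1:RatFunc ℚ)-t)^2*(1-t) = (1-t)^3 by ring]
      exact pow_ne_zero _ h1) hD]
    ring
  rw [e1, e2, e3, e4, div_sub_div_same, ← sub_div, ← add_div,
    show ((1:RatFunc ℚ)-t)^2*((1-t)*(1+t)) = (1-t)^3*(1+t) by ring]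
  congr 1
  ring

/-- Kirwan's partial desingularization computation: in `ℚ(t)`, for `g ≥ 2`,
the equivariant series of `ℙ(ℂ^g⊗sl(2))` minus the unstable stratum plus the blow-up
correction equals `(1−t^(g−1))(1−t^g)(1−t^(g+1))/((1−t)²(1−t²))`. -/
theorem partial_desingularization_series (g : ℕ) (hg : 2 ≤ g) :
    let t : RatFunc ℚ := RatFunc.X
    (1 / (1 - t ^ 2)) * ((1 - t ^ (3 * g)) / (1 - t))
      - t ^ (2 * g - 1) * ((1 - t ^ g) / (1 - t) ^ 2)
      + ((1 - t ^ g) / ((1 - t) * (1 - t ^ 2)) * (t * (1 - t ^ (2 * g - 3)) / (1 - t))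
          - t ^ (g - 1) * ((1 - t ^ (g - 1)) / (1 - t) ^ 2) * ((1 - t ^ g) / (1 - t)))
      = (1 - t ^ (g - 1)) * (1 - t ^ g) * (1 - t ^ (g + 1)) /
          ((1 - t) ^ 2 * (1 - t ^ 2)) := by
  intro t
  obtain ⟨k, rfl⟩ : ∃ k, g = k + 2 := ⟨g - 2, (Nat.sub_add_cancel hg).symm⟩
  have hX : ∀ c : ℚ, t ≠ RatFunc.C c := by
    intro c h
    have := RatFunc.algebraMap_injective ℚ
      (a₁ := Polynomial.X) (a₂ := Polynomial.C c) (by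
        simpa [RatFunc.algebraMap_X, RatFunc.algebraMap_C] using h)
    exact Polynomial.X_ne_C c this
  have h1 : (1 : RatFunc ℚ) - t ≠ 0 := by
    intro h
    exact hX 1 (by rw [map_one]; linear_combination -h)
  have h3 : (1 : RatFunc ℚ) + t ≠ 0 := by
    intro h
    exact hX (-1) (by rw [map_neg, map_one]; linear_combination h)
  have hsq : (1 : RatFunc ℚ) - t ^ 2 = (1 - t) * (1 + t) := by ring
  have e2 : 2 * (k + 2) - 1 = 2 * k + 3 := by omega
  have e3 : k + 2 - 1 = k + 1 := by omega
  have e4 : 2 * (k + 2) - 3 = 2 * k + 1 := by omega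
  have p1 : t ^ (3 * (k + 2)) = (t ^ k) ^ 3 * t ^ 6 := by
    rw [show 3 * (k + 2) = k * 3 + 6 by ring, pow_add, pow_mul]
  have p2 : t ^ (2 * k + 3) = t ^ 3 * (t ^ k) ^ 2 := by
    rw [show 2 * k + 3 = k * 2 + 3 by ring, pow_add, pow_mul, mul_comm]
  have p3 : t ^ (k + 2) = t ^ k * t ^ 2 := by rw [pow_add]
  have p4 : t ^ (2 * k + 1) = (t ^ k) ^ 2 * t := by
    rw [show 2 * k + 1 = k * 2 + 1 by ring, pow_add, pow_mul, pow_one]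
  have p5 : t ^ (k + 1) = t * t ^ k := by rw [pow_add, pow_one, mul_comm]
  have p6 : t ^ (k + 2 + 1) = t ^ k * t ^ 3 := by
    rw [show k + 2 + 1 = k + 3 by ring, pow_add]
  rw [e2, e3, e4, hsq, p1, p2, p3, p4, p5, p6]
  exact aux_identity t (t ^ k) h1 h3
end

section
/- In the field ℚ(t), for every integer g ≥ 3 and with A = ∏_{i=1}^{3}(1−t^(2g−6+2i))/(1−t^i), B = ∏_{i=1}^{2}(1−t^(2g−4+2i))/(1−t^i), c1 = (1−t)/(1−t^(6g−6)), c2 = (1−t)/(1−t^(2g−3)), c3 = (1−t)/(1−t^(4g−5)), the following identity holds: (t^5−t^2)·A·c1 + t^(2g−2)·B·c3 + t^2(1+t+t^2)·A·c1·c2 + t^(2g−4)(1+t)·B·c2·c3 + t^2(1+t+t^2)·A·c1·c3 + (1+t)(1+t+t^2)·A·c1·c2·c3 = (1−t^(2g−2))(1−t^(2g))/(1−t^(4g−5)) · [ (1−t^(8g−10))/((1−t^(2g−3))(1−t^(6g−6))) + t^2(1−t^(2g−4))(1−t^(6g−8))/((1−t^2)(1−t^(2g−3))(1−t^(6g−6)))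 + t^(2g−2)/(1−t^2) ]. -/
/-!
Every exponent occurring in the identity has the form `a + (2g - 6) b` with `a, b` independent
of `g`, so writing `u = t ^ (2g - 6)` turns both sides into the same rational expressions in
`t` and `u` for every `g ≥ 3`. The resulting two-variable identity holds in any field where its
denominators do not vanish: after clearing denominators it is a polynomial identity.
-/

theorem RatFunc.one_sub_X_pow_ne_zero {K : Type*} [Field K] {n : ℕ} (hn : n ≠ 0) :
    (1 - X ^ n : RatFunc K) ≠ 0 := by
  have h : (Polynomial.X ^ n - Polynomial.C 1 : Polynomial K) ≠ 0 :=
    Polynomial.X_pow_sub_C_ne_zero (Nat.pos_of_ne_zero hn) 1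
  rw [← neg_sub, neg_ne_zero]
  simpa using (map_ne_zero_iff _ (algebraMap_injective K)).2 h

theorem stringy_contribution_identity_of_field {F : Type*} [Field F] {t u : F}
    (h1 : 1 - t ≠ 0) (h2 : 1 - t ^ 2 ≠ 0) (h3 : 1 - t ^ 3 ≠ 0) (h4 : 1 - t ^ 3 * u ≠ 0)
    (h5 : 1 - t ^ 7 * u ^ 2 ≠ 0) (h6 : 1 - t ^ 12 * u ^ 3 ≠ 0) :
    let A := ∏ i ∈ Finset.Icc 1 3, (1 - t ^ (2 * i) * u) / (1 - t ^ i)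
    let B := ∏ i ∈ Finset.Icc 1 2, (1 - t ^ (2 + 2 * i) * u) / (1 - t ^ i)
    let c1 := (1 - t) / (1 - t ^ 12 * u ^ 3)
    let c2 := (1 - t) / (1 - t ^ 3 * u)
    let c3 := (1 - t) / (1 - t ^ 7 * u ^ 2)
    (t ^ 5 - t ^ 2) * A * c1 + t ^ 4 * u * B * c3
        + t ^ 2 * (1 + t + t ^ 2) * A * c1 * c2
        + t ^ 2 * u * (1 + t) * B * c2 * c3
        + t ^ 2 * (1 + t + t ^ 2) * A * c1 * c3
        + (1 + t) * (1 + t + t ^ 2) * A * c1 * c2 * c3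
      = (1 - t ^ 4 * u) * (1 - t ^ 6 * u) / (1 - t ^ 7 * u ^ 2) *
          ((1 - t ^ 14 * u ^ 4) / ((1 - t ^ 3 * u) * (1 - t ^ 12 * u ^ 3))
            + t ^ 2 * (1 - t ^ 2 * u) * (1 - t ^ 10 * u ^ 3) /
                ((1 - t ^ 2) * (1 - t ^ 3 * u) * (1 - t ^ 12 * u ^ 3))
            + t ^ 4 * u / (1 - t ^ 2)) := by
  intro A B c1 c2 c3
  simp only [A, B, c1, c2, c3, Finset.prod_Icc_succ_top, Nat.reduceAdd, Nat.one_le_ofNat,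
    Finset.Icc_self, Finset.prod_singleton]
  field_simp
  ring

/-- The simplification of the exceptional-divisor contributions (divided by `2^(2g)`)
to the stringy E-function of the Higgs moduli space, in `ℚ(t)`, for `g ≥ 3`. -/
theorem stringy_contribution_identity (g : ℕ) (hg : 3 ≤ g) :
    let t : RatFunc ℚ := RatFunc.X
    let A : RatFunc ℚ := ∏ i ∈ Finset.Icc 1 3, (1 - t ^ (2 * g - 6 + 2 * i)) / (1 - t ^ i)
    let B : RatFunc ℚ := ∏ i ∈ Finset.Icc 1 2, (1 - t ^ (2 * g - 4 + 2 * i)) / (1 - t ^ i)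
    let c1 : RatFunc ℚ := (1 - t) / (1 - t ^ (6 * g - 6))
    let c2 : RatFunc ℚ := (1 - t) / (1 - t ^ (2 * g - 3))
    let c3 : RatFunc ℚ := (1 - t) / (1 - t ^ (4 * g - 5))
    (t ^ 5 - t ^ 2) * A * c1 + t ^ (2 * g - 2) * B * c3
        + t ^ 2 * (1 + t + t ^ 2) * A * c1 * c2
        + t ^ (2 * g - 4) * (1 + t) * B * c2 * c3
        + t ^ 2 * (1 + t + t ^ 2) * A * c1 * c3
        + (1 + t) * (1 + t + t ^ 2) * A * c1 * c2 * c3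
      = (1 - t ^ (2 * g - 2)) * (1 - t ^ (2 * g)) / (1 - t ^ (4 * g - 5)) *
          ((1 - t ^ (8 * g - 10)) / ((1 - t ^ (2 * g - 3)) * (1 - t ^ (6 * g - 6)))
            + t ^ 2 * (1 - t ^ (2 * g - 4)) * (1 - t ^ (6 * g - 8)) /
                ((1 - t ^ 2) * (1 - t ^ (2 * g - 3)) * (1 - t ^ (6 * g - 6)))
            + t ^ (2 * g - 2) / (1 - t ^ 2)) := by
  intro t A B c1 c2 c3
  obtain ⟨k, rfl⟩ : ∃ k, g = k + 3 := ⟨g - 3, by omega⟩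
  have one_sub_ne_zero : ∀ a b, a ≠ 0 → 1 - t ^ a * (t ^ (2 * k)) ^ b ≠ 0 := fun a b ha => by
    rw [← pow_mul, ← pow_add]
    exact RatFunc.one_sub_X_pow_ne_zero (by omega)
  have key := stringy_contribution_identity_of_field (t := t) (u := t ^ (2 * k))
    (by simpa using one_sub_ne_zero 1 0 one_ne_zero)
    (by simpa using one_sub_ne_zero 2 0 two_ne_zero)
    (by simpa using one_sub_ne_zero 3 0 three_ne_zero)
    (by simpa using one_sub_ne_zero 3 1 three_ne_zero)
    (one_sub_ne_zero 7 2 (by norm_num)) (one_sub_ne_zero 12 3 (by norm_num))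
  simp only [A, B, c1, c2, c3]
  -- `convert` leaves only the exponent matchings `t ^ e = t ^ a * (t ^ (2 * k)) ^ b`
  convert key
  all_goals simp only [← pow_mul, ← pow_add]; congr 1; omega
end
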